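/- Let (F, W) be a mixed Hodge structure on V with bigrading {I^{p,q}} and let g ∈ exp(Λ^{-1,-1}_{(F,W)}), where Λ^{-1,-1}_{(F,W)} = ⊕_{r,s<0} gl(V)^{r,s}. Then the mixed Hodge structure (g.F, W) has Deligne bigrading I^{p,q}_{(g.F, W)} = g(I^{p,q}_{(F,W)}) for all p, q. -/

import Mathlib

section
variable {V : Type*} [AddCommGroup V] [Module ℂ V]

/-- A real structure (complex conjugation) on `V`. -/
def IsRealStructure (σ : V → V) : Prop :=
  (∀ x y, σ (x + y) = σ x + σ y) ∧
  (∀ (c : ℂ) (x : V), σ (c • x) = (starRingEnd ℂ) c • σ x) ∧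
  (∀ x, σ (σ x) = x)

/-- `I` is a bigrading of `V`. -/
def IsBigrading (I : ℤ → ℤ → Submodule ℂ V) : Prop :=
  iSupIndep (fun pq : ℤ × ℤ => I pq.1 pq.2) ∧ (⨆ pq : ℤ × ℤ, I pq.1 pq.2) = ⊤

/-- Deligne's conjugation condition for a bigrading. -/
def ConjRel (σ : V → V) (I : ℤ → ℤ → Submodule ℂ V) : Prop :=
  ∀ p q : ℤ, ∀ v ∈ I p q,
    σ v ∈ I q p ⊔ (⨆ r : ℤ, ⨆ _ : r < q, ⨆ s : ℤ, ⨆ _ : s < p, I r s)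

/-- `Λ^{-1,-1}_{(F,W)}` for the bigrading `I`. -/
def LambdaSet (I : ℤ → ℤ → Submodule ℂ V) : Set (Module.End ℂ V) :=
  {α | ∀ p q : ℤ, ∀ v ∈ I p q,
    α v ∈ ⨆ r : ℤ, ⨆ _ : r < p, ⨆ s : ℤ, ⨆ _ : s < q, I r s}

/-- The Hodge filtration `F^p = ⊕_{a ≥ p, b} I^{a,b}` of a bigrading. -/
def HodgeF (I : ℤ → ℤ → Submodule ℂ V) (p : ℤ) : Submodule ℂ V :=
  ⨆ a : ℤ, ⨆ _ : p ≤ a, ⨆ b : ℤ, I a b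

/-- The weight filtration `W_k = ⊕_{a+b ≤ k} I^{a,b}` of a bigrading. -/
def WtW (I : ℤ → ℤ → Submodule ℂ V) (k : ℤ) : Submodule ℂ V :=
  ⨆ a : ℤ, ⨆ b : ℤ, ⨆ _ : a + b ≤ k, I a b

/-- Truncated exponential (the exponential, for nilpotent arguments). -/
noncomputable def expNil (α : Module.End ℂ V) : Module.End ℂ V :=
  ∑ i ∈ Finset.range (Module.finrank ℂ V + 1), ((i.factorial : ℂ))⁻¹ • α ^ i

end

section Aux
variable {V : Type*} [AddCommGroup V] [Module ℂ V]

/-- The "strictly lower" part `⊕_{r<p, s<q} I^{r,s}`. -/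
def Low (I : ℤ → ℤ → Submodule ℂ V) (p q : ℤ) : Submodule ℂ V :=
  ⨆ r : ℤ, ⨆ _ : r < p, ⨆ s : ℤ, ⨆ _ : s < q, I r s

lemma I_le_Low (I : ℤ → ℤ → Submodule ℂ V) {p q r s : ℤ} (hr : r < p) (hs : s < q) :
    I r s ≤ Low I p q := by
  refine le_iSup_of_le r (le_iSup_of_le hr (le_iSup_of_le s (le_iSup_of_le hs le_rfl)))

lemma Low_mono (I : ℤ → ℤ → Submodule ℂ V) {p q p' q' : ℤ} (hp : p ≤ p') (hq : q ≤ q') :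
    Low I p q ≤ Low I p' q' := by
  refine iSup_le fun r => iSup_le fun hr => iSup_le fun s => iSup_le fun hs => ?_
  exact I_le_Low I (lt_of_lt_of_le hr hp) (lt_of_lt_of_le hs hq)

lemma I_le_WtW (I : ℤ → ℤ → Submodule ℂ V) {a b k : ℤ} (h : a + b ≤ k) :
    I a b ≤ WtW I k := by
  refine le_iSup_of_le a (le_iSup_of_le b (le_iSup_of_le h le_rfl))

lemma WtW_mono (I : ℤ → ℤ → Submodule ℂ V) {j k : ℤ} (h : j ≤ k) :
    WtW I j ≤ WtW I k := by
  refine iSup_le fun a => iSup_le fun b => iSup_le fun hab => ?_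
  exact I_le_WtW I (hab.trans h)

lemma Low_le_WtW (I : ℤ → ℤ → Submodule ℂ V) (p q : ℤ) :
    Low I p q ≤ WtW I (p + q - 2) := by
  refine iSup_le fun r => iSup_le fun hr => iSup_le fun s => iSup_le fun hs => ?_
  exact I_le_WtW I (by omega)

/-- additive maps send sups into targets -/
lemma sigma_mem_of_iSup {σ : V → V} (hadd : ∀ x y, σ (x + y) = σ x + σ y)
    {ι : Sort*} (f : ι → Submodule ℂ V) (M : Submodule ℂ V)
    (h : ∀ i, ∀ v ∈ f i, σ v ∈ M) : ∀ v ∈ ⨆ i, f i, σ v ∈ M := by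
  have h0 : σ 0 = 0 := by
    have h1 := hadd 0 0
    rw [add_zero] at h1
    exact (left_eq_add.mp h1)
  intro v hv
  refine Submodule.iSup_induction (motive := fun x => σ x ∈ M) f hv h ?_ ?_
  · show σ 0 ∈ M
    rw [h0]; exact M.zero_mem
  · intro x y hx hy
    show σ (x + y) ∈ M
    rw [hadd]; exact M.add_mem hx hy

end Aux

/-- If `(F, W)` is a mixed Hodge structure with Deligne bigrading `I` and
`g = exp(α)` with `α ∈ Λ^{-1,-1}_{(F,W)}`, then `(g.F, W)` is again a mixed Hodge structure
and its Deligne bigrading is `I^{p,q}_{(g.F,W)} = g(I^{p,q}_{(F,W)})`:  the family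
`J p q = g(I p q)` is a bigrading with Hodge filtration `g.F`, weight filtration `W`, and it
satisfies Deligne's conjugation condition. -/
theorem lambda_exp_translates_bigrading {V : Type*} [AddCommGroup V] [Module ℂ V]
    [FiniteDimensional ℂ V] (σ : V → V) (hσ : IsRealStructure σ)
    (I : ℤ → ℤ → Submodule ℂ V) (hI : IsBigrading I) (hc : ConjRel σ I)
    (α : Module.End ℂ V) (hα : α ∈ LambdaSet I)
    (g : Module.End ℂ V) (hg : g = expNil α) :
    IsBigrading (fun p q => (I p q).map g) ∧
    (∀ p : ℤ, HodgeF (fun p q => (I p q).map g) p = (HodgeF I p).map g) ∧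
    (∀ k : ℤ, WtW (fun p q => (I p q).map g) k = WtW I k) ∧
    ConjRel σ (fun p q => (I p q).map g) := by
  obtain ⟨hadd, hsmul, hinvol⟩ := hσ
  obtain ⟨hind, hsup⟩ := hI
  have hα' : ∀ p q : ℤ, ∀ v ∈ I p q, α v ∈ Low I p q := hα
  have hc' : ∀ p q : ℤ, ∀ v ∈ I p q, σ v ∈ I q p ⊔ Low I q p := hc
  -- α preserves Low
  have hαL : ∀ p q : ℤ, ∀ v ∈ Low I p q, α v ∈ Low I p q := by
    intro p q v hv
    have hle : Low I p q ≤ Submodule.comap α (Low I p q) := by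
      refine iSup_le fun r => iSup_le fun hr => iSup_le fun s => iSup_le fun hs => ?_
      intro w hw
      exact Submodule.mem_comap.mpr ((Low_mono I hr.le hs.le) (hα' r s w hw))
    exact hle hv
  -- powers of α send I p q into Low
  have hpow : ∀ (i : ℕ) (p q : ℤ), ∀ v ∈ I p q, (α ^ (i + 1)) v ∈ Low I p q := by
    intro i
    induction i with
    | zero => intro p q v hv; simpa using hα' p q v hv
    | succ i ih =>
      intro p q v hv
      have h1 : (α ^ (i + 1 + 1)) v = α ((α ^ (i + 1)) v) := by
        rw [pow_succ']; rfl
      rw [h1]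
      exact hαL p q _ (ih p q v hv)
  -- g applied pointwise
  have hexp : ∀ v : V, g v = ∑ i ∈ Finset.range (Module.finrank ℂ V + 1),
      ((i.factorial : ℂ))⁻¹ • (α ^ i) v := by
    intro v
    rw [hg]
    simp [expNil, LinearMap.sum_apply, LinearMap.smul_apply]
  -- g v - v lands in Low
  have hNL : ∀ p q : ℤ, ∀ v ∈ I p q, g v - v ∈ Low I p q := by
    intro p q v hv
    rw [hexp, Finset.sum_range_succ']
    simp only [pow_zero, Module.End.one_apply, Nat.factorial_zero, Nat.cast_one, inv_one,
      one_smul]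
    rw [add_sub_cancel_right]
    exact Submodule.sum_mem _ fun i _ => Submodule.smul_mem _ _ (hpow i p q v hv)
  -- g v - v on Low
  have hNLL : ∀ p q : ℤ, ∀ v ∈ Low I p q, g v - v ∈ Low I p q := by
    intro p q v hv
    have hle : Low I p q ≤ Submodule.comap (g - 1) (Low I p q) := by
      refine iSup_le fun r => iSup_le fun hr => iSup_le fun s => iSup_le fun hs => ?_
      intro w hw
      refine Submodule.mem_comap.mpr ?_
      have : (g - 1) w = g w - w := by simp
      rw [this]
      exact (Low_mono I hr.le hs.le) (hNL r s w hw)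
    have := hle hv
    rw [Submodule.mem_comap] at this
    simpa using this
  -- g v - v on weight filtration: drops weight
  have hNW : ∀ m : ℤ, ∀ v ∈ WtW I m, g v - v ∈ WtW I (m - 1) := by
    intro m v hv
    have hle : WtW I m ≤ Submodule.comap (g - 1) (WtW I (m - 1)) := by
      refine iSup_le fun a => iSup_le fun b => iSup_le fun hab => ?_
      intro w hw
      refine Submodule.mem_comap.mpr ?_
      have h1 : (g - 1) w = g w - w := by simp
      rw [h1]
      exact (WtW_mono I (by omega : a + b - 2 ≤ m - 1))
        ((Low_le_WtW I a b) (hNL a b w hw))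
    have := hle hv
    rw [Submodule.mem_comap] at this
    simpa using this
  -- finiteness of nonzero pieces, and weight bounds
  have hfin : {pq : ℤ × ℤ | I pq.1 pq.2 ≠ ⊥}.Finite :=
    WellFoundedGT.finite_ne_bot_of_iSupIndep hind
  set S : Finset (ℤ × ℤ) := hfin.toFinset with hS
  set T : Finset ℤ := insert 0 (S.image fun pq => pq.1 + pq.2) with hT
  have hTne : T.Nonempty := ⟨0, Finset.mem_insert_self _ _⟩
  set k0 : ℤ := T.min' hTne - 1 with hk0
  set k1 : ℤ := T.max' hTne with hk1
  have hmemT : ∀ a b : ℤ, I a b ≠ ⊥ → a + b ∈ T := by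
    intro a b h
    refine Finset.mem_insert_of_mem (Finset.mem_image.mpr ⟨(a, b), ?_, rfl⟩)
    rw [hS, Set.Finite.mem_toFinset]
    exact h
  have hW0 : WtW I k0 = ⊥ := by
    rw [eq_bot_iff]
    refine iSup_le fun a => iSup_le fun b => iSup_le fun hab => ?_
    by_cases h : I a b = ⊥
    · rw [h]
    · exfalso
      have h1 : T.min' hTne ≤ a + b := Finset.min'_le T _ (hmemT a b h)
      omega
  have hW1 : WtW I k1 = ⊤ := by
    rw [eq_top_iff, ← hsup]
    refine iSup_le fun pq => ?_
    by_cases h : I pq.1 pq.2 = ⊥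
    · rw [h]; exact bot_le
    · exact I_le_WtW I (Finset.le_max' T _ (hmemT pq.1 pq.2 h))
  have hk01 : k0 ≤ k1 := by
    have := Finset.min'_le T _ (T.max'_mem hTne)
    omega
  -- injectivity of g
  have hker : ∀ k : ℤ, k0 ≤ k → ∀ v ∈ WtW I k, g v = 0 → v = 0 := by
    refine Int.le_induction (motive := fun k _ => ∀ v ∈ WtW I k, g v = 0 → v = 0) ?_ ?_
    · intro v hv _
      rw [hW0] at hv
      simpa using hv
    · intro k hk ih v hv hgv
      have h1 : g v - v ∈ WtW I (k + 1 - 1) := hNW (k + 1) v hv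
      rw [hgv, zero_sub, show k + 1 - 1 = k by omega] at h1
      have h2 : v ∈ WtW I k := by simpa using (WtW I k).neg_mem h1
      exact ih v h2 hgv
  have hinj : Function.Injective g := by
    rw [← LinearMap.ker_eq_bot]
    rw [eq_bot_iff]
    intro v hv
    rw [LinearMap.mem_ker] at hv
    have hvtop : v ∈ WtW I k1 := by rw [hW1]; exact Submodule.mem_top
    simpa using hker k1 hk01 v hvtop hv
  have hsurj : Function.Surjective g := LinearMap.injective_iff_surjective.mp hinj
  -- invariant subspaces are fixed
  have hstab : ∀ M : Submodule ℂ V, M.map g ≤ M → M.map g = M := by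
    intro M hle
    have h1 : Module.finrank ℂ (M.map g) = Module.finrank ℂ M :=
      (Submodule.equivMapOfInjective g hinj M).finrank_eq.symm
    exact Submodule.eq_of_le_of_finrank_le hle h1.ge
  -- weight filtration is preserved
  have hgW : ∀ k : ℤ, (WtW I k).map g = WtW I k := by
    intro k
    refine hstab _ ?_
    rw [Submodule.map_le_iff_le_comap]
    intro v hv
    refine Submodule.mem_comap.mpr ?_
    have h1 : g v = v + (g v - v) := by abel
    rw [h1]
    exact Submodule.add_mem _ hv (WtW_mono I (by omega : k - 1 ≤ k) (hNW k v hv))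
  -- the key mixed spaces are preserved
  have hM : ∀ p q : ℤ, (I p q ⊔ Low I p q).map g = I p q ⊔ Low I p q := by
    intro p q
    refine hstab _ ?_
    rw [Submodule.map_le_iff_le_comap]
    refine sup_le ?_ ?_
    · intro v hv
      refine Submodule.mem_comap.mpr ?_
      have h1 : g v = v + (g v - v) := by abel
      rw [h1]
      exact Submodule.add_mem _ (Submodule.mem_sup_left hv)
        (Submodule.mem_sup_right (hNL p q v hv))
    · intro v hv
      refine Submodule.mem_comap.mpr ?_
      have h1 : g v = v + (g v - v) := by abel
      rw [h1]
      exact Submodule.add_mem _ (Submodule.mem_sup_right hv)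
        (Submodule.mem_sup_right (hNLL p q v hv))
  -- σ maps Low I p q into Low I q p
  have hσL : ∀ p q : ℤ, ∀ v ∈ Low I p q, σ v ∈ Low I q p := by
    intro p q
    refine sigma_mem_of_iSup hadd _ _ ?_
    intro r
    refine sigma_mem_of_iSup hadd _ _ ?_
    intro hr
    refine sigma_mem_of_iSup hadd _ _ ?_
    intro s
    refine sigma_mem_of_iSup hadd _ _ ?_
    intro hs v hv
    have h := hc' r s v hv
    exact (sup_le (I_le_Low I hs hr) (Low_mono I hs.le hr.le)) h
  -- the linear equivalence
  let e : V ≃ₗ[ℂ] V := LinearEquiv.ofBijective g ⟨hinj, hsurj⟩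
  have hmapeq : ∀ p : Submodule ℂ V, Submodule.map (e : V →ₗ[ℂ] V) p = p.map g := by
    intro p
    ext x
    simp only [Submodule.mem_map]
    constructor
    · rintro ⟨y, hy, rfl⟩; exact ⟨y, hy, rfl⟩
    · rintro ⟨y, hy, rfl⟩; exact ⟨y, hy, rfl⟩
  refine ⟨⟨?_, ?_⟩, ?_, ?_, ?_⟩
  · -- independence
    have h := hind.map_orderIso (Submodule.orderIsoMapComap e)
    have heq : (⇑(Submodule.orderIsoMapComap e) ∘ fun pq : ℤ × ℤ => I pq.1 pq.2)
        = fun pq : ℤ × ℤ => (I pq.1 pq.2).map g := by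
      funext pq
      rw [Function.comp_apply, Submodule.orderIsoMapComap_apply]
      exact hmapeq _
    exact heq ▸ h
  · -- supremum is ⊤
    rw [← Submodule.map_iSup, hsup, Submodule.map_top, LinearMap.range_eq_top]
    exact hsurj
  · -- Hodge filtration
    intro p
    simp only [HodgeF, Submodule.map_iSup]
  · -- weight filtration
    intro k
    have h1 : WtW (fun p q => (I p q).map g) k = (WtW I k).map g := by
      simp only [WtW, Submodule.map_iSup]
    rw [h1, hgW]
  · -- conjugation condition
    intro p q v hv
    simp only [Submodule.mem_map] at hv
    obtain ⟨w, hw, rfl⟩ := hv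
    have e2 : ((I q p).map g ⊔
        ⨆ r : ℤ, ⨆ _ : r < q, ⨆ s : ℤ, ⨆ _ : s < p, (I r s).map g)
        = I q p ⊔ Low I q p := by
      have h3 : (⨆ r : ℤ, ⨆ _ : r < q, ⨆ s : ℤ, ⨆ _ : s < p, (I r s).map g)
          = (Low I q p).map g := by
        simp only [Low, Submodule.map_iSup]
      rw [h3, ← Submodule.map_sup, hM q p]
    show σ (g w) ∈ _
    rw [e2]
    have e1 : σ (g w) = σ w + σ (g w - w) := by
      rw [← hadd]
      congr 1
      abel
    rw [e1]
    exact Submodule.add_mem _ (hc' p q w hw)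
      (Submodule.mem_sup_right (hσL p q _ (hNL p q w hw)))
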